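/- arXiv:2605.23735 — 2 statements merged into one kernel-verified Lean document; each statement's English description precedes it below -/
import Mathlib

section
/- If S is a densely defined closed linear operator from H to K and C is a conjugation on K, then (CS)(CS)^♯ = CSS*C is a positive self-adjoint (linear) operator on K; in particular D(SS*C) is dense and (CSS*C)* = CSS*C. -/
open Classical
noncomputable section

variable {H K : Type*}
  [NormedAddCommGroup H] [InnerProductSpace ℂ H] [CompleteSpace H]
  [NormedAddCommGroup K] [InnerProductSpace ℂ K] [CompleteSpace K]

/-- `D` is a complex linear subspace of `H` (as a set). -/
def IsLinSubspace (D : Set H) : Prop :=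
  (0 : H) ∈ D ∧ ∀ (a : ℂ) (x y : H), x ∈ D → y ∈ D → a • x + y ∈ D

/-- `f` is (complex) linear on `D`. -/
def LinearOn (D : Set H) (f : H → K) : Prop :=
  ∀ (a : ℂ) (x y : H), x ∈ D → y ∈ D → f (a • x + y) = a • f x + f y

/-- `f` is antilinear (conjugate-linear) on `D`. -/
def AntilinearOn (D : Set H) (f : H → K) : Prop :=
  ∀ (a : ℂ) (x y : H), x ∈ D → y ∈ D → f (a • x + y) = (starRingEnd ℂ a) • f x + f y

/-- The operator with domain `D` given by `f` has closed graph, i.e. is a closed operator. -/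
def HasClosedGraph (D : Set H) (f : H → K) : Prop :=
  IsClosed {p : H × K | p.1 ∈ D ∧ f p.1 = p.2}

/-- `C` is a conjugation on `K`: an isometric antilinear involution. -/
def IsConjugation (C : K → K) : Prop :=
  (∀ (a : ℂ) (x y : K), C (a • x + y) = (starRingEnd ℂ a) • C x + C y) ∧
  (∀ x, C (C x) = x) ∧
  ∀ x y : K, (inner ℂ (C x) (C y) : ℂ) = inner ℂ y x

/-- Domain of the (linear) Hilbert space adjoint of the operator `(D, f)`. -/
def adjDom (D : Set H) (f : H → K) : Set K :=
  {y | ∃ u : H, ∀ x ∈ D, (inner ℂ (f x) y : ℂ) = inner ℂ x u}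

/-- The (linear) Hilbert space adjoint of the operator `(D, f)`; `0` outside its domain.
For a densely defined operator the vector `u` below is unique. -/
def adjFun (D : Set H) (f : H → K) : K → H := fun y =>
  if h : ∃ u : H, ∀ x ∈ D, (inner ℂ (f x) y : ℂ) = inner ℂ x u then h.choose else 0

/-- Domain of the antilinear adjoint `T^♯` of the operator `(D, f)`:
`y ∈ D(T^♯)` iff there is `u` with `conj ⟪f x, y⟫ = ⟪x, u⟫` for all `x ∈ D`. -/
def sharpDom (D : Set H) (f : H → K) : Set K :=
  {y | ∃ u : H, ∀ x ∈ D, (starRingEnd ℂ) (inner ℂ (f x) y : ℂ) = inner ℂ x u}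

/-- The antilinear adjoint `T^♯`; `0` outside its domain.
For a densely defined operator the vector `u` below is unique. -/
def sharpFun (D : Set H) (f : H → K) : K → H := fun y =>
  if h : ∃ u : H, ∀ x ∈ D, (starRingEnd ℂ) (inner ℂ (f x) y : ℂ) = inner ℂ x u then h.choose
  else 0

/-- Orthogonal complement (as a set) of a set. -/
def perpSet (S : Set K) : Set K := {y | ∀ z ∈ S, (inner ℂ z y : ℂ) = 0}

/-! Von Neumann's argument: since the graph of `S` is closed, splitting `(0, z)` along the graph
and its orthogonal complement writes every `z` as `y + S S* y`. Testing against such vectors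
shows that `S S*` is densely defined and self-adjoint, and `⟪S S* y, y⟫ = ‖S* y‖²`.
Conjugating by the antiunitary involution `C` preserves all of this. -/

open scoped InnerProductSpace

section

variable {E F : Type*} [NormedAddCommGroup E] [InnerProductSpace ℂ E]
  [NormedAddCommGroup F] [InnerProductSpace ℂ F]

/-- The domain `D(S S*)`. -/
def compAdjDom (DS : Set E) (S : E → F) : Set F :=
  {y | y ∈ adjDom DS S ∧ adjFun DS S y ∈ DS}

def IsLinSubspace.toSubmodule {D : Set E} (hD : IsLinSubspace D) : Submodule ℂ E where
  carrier := D
  zero_mem' := hD.1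
  add_mem' {x y} hx hy := by simpa using hD.2 1 x y hx hy
  smul_mem' a x hx := by simpa using hD.2 a x 0 hx hD.1

theorem LinearOn.map_zero {D : Set E} {f : E → F} (hD : IsLinSubspace D) (hf : LinearOn D f) :
    f 0 = 0 := by
  simpa using hf 1 0 0 hD.1 hD.1

section adjoint

variable {D : Set E} {f : E → F}

theorem inner_apply_eq_inner_adjFun {y : F} (hy : y ∈ adjDom D f) :
    ∀ x ∈ D, ⟪f x, y⟫_ℂ = ⟪x, adjFun D f y⟫_ℂ := by
  have hy' : ∃ u : E, ∀ x ∈ D, ⟪f x, y⟫_ℂ = ⟪x, u⟫_ℂ := hy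
  rw [adjFun, dif_pos hy']
  exact hy'.choose_spec

theorem adjFun_eq_of_forall (hD : Dense D) {y : F} {u : E}
    (hu : ∀ x ∈ D, ⟪f x, y⟫_ℂ = ⟪x, u⟫_ℂ) : adjFun D f y = u :=
  hD.eq_of_inner_right ℂ fun x hx => by
    rw [← inner_apply_eq_inner_adjFun ⟨u, hu⟩ x hx, hu x hx]

theorem isLinSubspace_adjDom : IsLinSubspace (adjDom D f) := by
  refine ⟨⟨0, fun x _ => by simp⟩, ?_⟩
  rintro a y y' ⟨u, hu⟩ ⟨u', hu'⟩
  exact ⟨a • u + u', fun x hx => by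
    simp only [inner_add_right, inner_smul_right, hu x hx, hu' x hx]⟩

theorem adjFun_zero (hD : Dense D) : adjFun D f 0 = 0 :=
  adjFun_eq_of_forall hD fun x _ => by simp

theorem adjFun_smul_add (hD : Dense D) (a : ℂ) {y y' : F} (hy : y ∈ adjDom D f)
    (hy' : y' ∈ adjDom D f) :
    adjFun D f (a • y + y') = a • adjFun D f y + adjFun D f y' :=
  adjFun_eq_of_forall hD fun x hx => by
    simp only [inner_add_right, inner_smul_right, inner_apply_eq_inner_adjFun hy x hx,
      inner_apply_eq_inner_adjFun hy' x hx]

end adjoint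

section compAdj

variable {DS : Set E} {S : E → F}

theorem isLinSubspace_compAdjDom (hsub : IsLinSubspace DS) (hdense : Dense DS) :
    IsLinSubspace (compAdjDom DS S) := by
  refine ⟨⟨isLinSubspace_adjDom.1, by simpa [adjFun_zero hdense] using hsub.1⟩, ?_⟩
  rintro a y y' ⟨hy, hSy⟩ ⟨hy', hSy'⟩
  exact ⟨isLinSubspace_adjDom.2 a y y' hy hy',
    adjFun_smul_add hdense a hy hy' ▸ hsub.2 a _ _ hSy hSy'⟩

theorem isLinSubspace_graph (hsub : IsLinSubspace DS) (hlin : LinearOn DS S) :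
    IsLinSubspace {p : WithLp 2 (E × F) | p.fst ∈ DS ∧ S p.fst = p.snd} := by
  refine ⟨⟨hsub.1, hlin.map_zero hsub⟩, ?_⟩
  rintro a p q ⟨hp, hSp⟩ ⟨hq, hSq⟩
  refine ⟨hsub.2 a _ _ hp hq, ?_⟩
  simp only [WithLp.add_fst, WithLp.smul_fst, WithLp.add_snd, WithLp.smul_snd]
  rw [hlin a _ _ hp hq, hSp, hSq]

theorem exists_mem_compAdjDom_add_eq [CompleteSpace E] [CompleteSpace F]
    (hsub : IsLinSubspace DS) (hlin : LinearOn DS S) (hdense : Dense DS)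
    (hclosed : HasClosedGraph DS S) (z : F) :
    ∃ y ∈ compAdjDom DS S, y + S (adjFun DS S y) = z := by
  set G := (isLinSubspace_graph hsub hlin).toSubmodule
  have hG : IsClosed (G : Set (WithLp 2 (E × F))) :=
    hclosed.preimage (WithLp.prodContinuousLinearEquiv 2 ℂ E F).continuous
  have : CompleteSpace G := hG.completeSpace_coe
  obtain ⟨g, ⟨hg, hSg⟩, h, hh, hw⟩ := G.exists_add_mem_mem_orthogonal (WithLp.toLp 2 (0, z))
  have hfst : h.fst = -g.fst := eq_neg_of_add_eq_zero_right (congrArg WithLp.fst hw).symm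
  have hadj : ∀ x ∈ DS, ⟪S x, h.snd⟫_ℂ = ⟪x, g.fst⟫_ℂ := by
    intro x hx
    have horth := (Submodule.mem_orthogonal G h).mp hh (WithLp.toLp 2 (x, S x)) ⟨hx, rfl⟩
    rw [WithLp.prod_inner_apply] at horth
    change ⟪x, h.fst⟫_ℂ + ⟪S x, h.snd⟫_ℂ = 0 at horth
    rw [hfst, inner_neg_right] at horth
    linear_combination horth
  have hSadj : adjFun DS S h.snd = g.fst := adjFun_eq_of_forall hdense hadj
  refine ⟨h.snd, ⟨⟨g.fst, hadj⟩, hSadj ▸ hg⟩, ?_⟩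
  rw [hSadj, hSg, add_comm]
  exact (congrArg WithLp.snd hw).symm

theorem inner_eq_inner_adjFun_adjFun {y y' : F} (hy : y ∈ adjDom DS S)
    (hy' : adjFun DS S y' ∈ DS) :
    ⟪y, S (adjFun DS S y')⟫_ℂ = ⟪adjFun DS S y, adjFun DS S y'⟫_ℂ := by
  rw [← inner_conj_symm, inner_apply_eq_inner_adjFun hy _ hy', inner_conj_symm]

theorem inner_compAdj_comm {y y' : F} (hy : y ∈ compAdjDom DS S)
    (hy' : y' ∈ compAdjDom DS S) :
    ⟪S (adjFun DS S y), y'⟫_ℂ = ⟪y, S (adjFun DS S y')⟫_ℂ := by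
  rw [inner_apply_eq_inner_adjFun hy'.1 _ hy.2, inner_eq_inner_adjFun_adjFun hy.1 hy'.2]

theorem dense_compAdjDom [CompleteSpace E] [CompleteSpace F]
    (hsub : IsLinSubspace DS) (hlin : LinearOn DS S) (hdense : Dense DS)
    (hclosed : HasClosedGraph DS S) : Dense (compAdjDom DS S) := by
  change Dense (((isLinSubspace_compAdjDom hsub hdense).toSubmodule : Submodule ℂ F) : Set F)
  rw [Submodule.dense_iff_topologicalClosure_eq_top, Submodule.topologicalClosure_eq_top_iff,
    Submodule.eq_bot_iff]
  intro z hz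
  obtain ⟨y, hy, rfl⟩ := exists_mem_compAdjDom_add_eq hsub hlin hdense hclosed z
  -- `⟪y, y + S S* y⟫ = ‖y‖² + ‖S* y‖²` vanishes
  have h0 : ⟪y, y + S (adjFun DS S y)⟫_ℂ = 0 := (Submodule.mem_orthogonal _ _).mp hz y hy
  rw [inner_add_right, inner_eq_inner_adjFun_adjFun hy.1 hy.2, inner_self_eq_norm_sq_to_K,
    inner_self_eq_norm_sq_to_K] at h0
  norm_cast at h0
  rw [RCLike.ofReal_eq_zero] at h0
  have hy0 : y = 0 := by
    rw [← norm_eq_zero]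
    nlinarith [sq_nonneg ‖adjFun DS S y‖, norm_nonneg y]
  rw [hy0, adjFun_zero hdense, hlin.map_zero hsub, add_zero]

theorem adjDom_compAdj [CompleteSpace E] [CompleteSpace F]
    (hsub : IsLinSubspace DS) (hlin : LinearOn DS S) (hdense : Dense DS)
    (hclosed : HasClosedGraph DS S) :
    adjDom (compAdjDom DS S) (fun y => S (adjFun DS S y)) = compAdjDom DS S := by
  refine Set.Subset.antisymm ?_ fun y' hy' => ⟨_, fun y hy => inner_compAdj_comm hy hy'⟩
  rintro y' ⟨u, hu⟩
  obtain ⟨y₀, hy₀, hy₀u⟩ := exists_mem_compAdjDom_add_eq hsub hlin hdense hclosed (y' + u)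
  suffices y' = y₀ from this ▸ hy₀
  refine ext_inner_left ℂ fun v => ?_
  obtain ⟨y, hy, rfl⟩ := exists_mem_compAdjDom_add_eq hsub hlin hdense hclosed v
  calc ⟪y + S (adjFun DS S y), y'⟫_ℂ = ⟪y, y' + u⟫_ℂ := by
        rw [inner_add_left, inner_add_right, hu y hy]
    _ = ⟪y + S (adjFun DS S y), y₀⟫_ℂ := by
        rw [← hy₀u, inner_add_right, inner_add_left, inner_compAdj_comm hy hy₀]

theorem adjFun_compAdj (hdense : Dense (compAdjDom DS S)) {y : F}
    (hy : y ∈ compAdjDom DS S) :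
    adjFun (compAdjDom DS S) (fun y => S (adjFun DS S y)) y = S (adjFun DS S y) :=
  adjFun_eq_of_forall hdense fun _ hx => inner_compAdj_comm hx hy

end compAdj

section conjugation

variable {C : F → F}

theorem IsConjugation.map_zero (hC : IsConjugation C) : C 0 = 0 := by
  simpa using hC.1 1 0 0

def IsConjugation.toLinearIsometryEquiv (hC : IsConjugation C) : F ≃ₗᵢ⋆[ℂ] F where
  toFun := C
  invFun := C
  map_add' x y := by simpa using hC.1 1 x y
  map_smul' a x := by simpa [hC.map_zero] using hC.1 a x 0
  left_inv := hC.2.1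
  right_inv := hC.2.1
  norm_map' x := by
    have h := hC.2.2 x x
    rw [inner_self_eq_norm_sq_to_K, inner_self_eq_norm_sq_to_K] at h
    exact (sq_eq_sq₀ (norm_nonneg _) (norm_nonneg _)).mp (by exact_mod_cast h)

theorem IsConjugation.dense_preimage (hC : IsConjugation C) {s : Set F} (hs : Dense s) :
    Dense (C ⁻¹' s) :=
  hs.preimage hC.toLinearIsometryEquiv.toHomeomorph.isOpenMap

theorem IsConjugation.inner_map_left (hC : IsConjugation C) (x y : F) :
    ⟪C x, y⟫_ℂ = starRingEnd ℂ ⟪x, C y⟫_ℂ := by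
  rw [inner_conj_symm, ← hC.2.2 x (C y), hC.2.1]

theorem IsConjugation.inner_map_right (hC : IsConjugation C) (x y : F) :
    ⟪x, C y⟫_ℂ = starRingEnd ℂ ⟪C x, y⟫_ℂ := by
  rw [inner_conj_symm, ← hC.2.2 (C x) y, hC.2.1]

end conjugation

section conjAdjoint

variable {D : Set E} {f : E → F} {C₁ : E → E} {C₂ : F → F}

theorem adjDom_conj (hC₁ : IsConjugation C₁) (hC₂ : IsConjugation C₂) :
    adjDom (C₁ ⁻¹' D) (fun x => C₂ (f (C₁ x))) = C₂ ⁻¹' adjDom D f := by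
  ext y
  constructor
  · rintro ⟨v, hv⟩
    refine ⟨C₁ v, fun x hx => ?_⟩
    have hvx : ⟪C₂ (f x), y⟫_ℂ = ⟪C₁ x, v⟫_ℂ := by
      simpa only [hC₁.2.1] using hv (C₁ x) (by rwa [Set.mem_preimage, hC₁.2.1])
    rw [hC₂.inner_map_left] at hvx
    rw [hC₁.inner_map_right, ← hvx, Complex.conj_conj]
  · rintro ⟨u, hu⟩
    exact ⟨C₁ u, fun x hx => by rw [hC₂.inner_map_left, hu _ hx, hC₁.inner_map_right]⟩

theorem adjFun_conj (hC₁ : IsConjugation C₁) (hC₂ : IsConjugation C₂) (hD : Dense D) {y : F}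
    (hy : C₂ y ∈ adjDom D f) :
    adjFun (C₁ ⁻¹' D) (fun x => C₂ (f (C₁ x))) y = C₁ (adjFun D f (C₂ y)) :=
  adjFun_eq_of_forall (hC₁.dense_preimage hD) fun x hx => by
    rw [hC₂.inner_map_left, inner_apply_eq_inner_adjFun hy _ hx, hC₁.inner_map_right]

end conjAdjoint

end

/-- For `S` densely defined closed linear from `H` to `K` and `C` a
conjugation on `K`, the linear operator `(CS)(CS)^♯ = CSS*C` (with its natural composition
domain) is densely defined, self-adjoint and positive. -/
theorem CSSstarC_positive_selfAdjoint
    (DS : Set H) (S : H → K) (C : K → K)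
    (hsub : IsLinSubspace DS) (hlin : LinearOn DS S) (hdense : Dense DS)
    (hclosed : HasClosedGraph DS S) (hC : IsConjugation C) :
    Dense {y : K | C y ∈ adjDom DS S ∧ adjFun DS S (C y) ∈ DS} ∧
    adjDom {y : K | C y ∈ adjDom DS S ∧ adjFun DS S (C y) ∈ DS}
        (fun y => C (S (adjFun DS S (C y))))
      = {y : K | C y ∈ adjDom DS S ∧ adjFun DS S (C y) ∈ DS} ∧
    (∀ y ∈ {y : K | C y ∈ adjDom DS S ∧ adjFun DS S (C y) ∈ DS},
      adjFun {y : K | C y ∈ adjDom DS S ∧ adjFun DS S (C y) ∈ DS}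
        (fun y => C (S (adjFun DS S (C y)))) y = C (S (adjFun DS S (C y)))) ∧
    ∀ y ∈ {y : K | C y ∈ adjDom DS S ∧ adjFun DS S (C y) ∈ DS},
      0 ≤ (inner ℂ (C (S (adjFun DS S (C y)))) y : ℂ).re ∧
      (inner ℂ (C (S (adjFun DS S (C y)))) y : ℂ).im = 0 := by
  have hdense₂ := dense_compAdjDom hsub hlin hdense hclosed
  have hadj := adjDom_compAdj hsub hlin hdense hclosed
  refine ⟨hC.dense_preimage hdense₂, ?_, fun y hy => ?_, fun y hy => ?_⟩
  · exact (adjDom_conj hC hC).trans (congrArg _ hadj)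
  · have hy' : C y ∈ adjDom (compAdjDom DS S) fun y => S (adjFun DS S y) := by
      rw [hadj]
      exact hy
    exact (adjFun_conj hC hC hdense₂ hy').trans (congrArg C (adjFun_compAdj hdense₂ hy))
  · have hquad : ⟪C (S (adjFun DS S (C y))), y⟫_ℂ
        = starRingEnd ℂ ⟪adjFun DS S (C y), adjFun DS S (C y)⟫_ℂ := by
      rw [hC.inner_map_left, inner_apply_eq_inner_adjFun hy.1 _ hy.2]
    rw [hquad, Complex.conj_re, Complex.conj_im, neg_eq_zero]
    exact ⟨inner_self_nonneg (𝕜 := ℂ), inner_self_im (𝕜 := ℂ) _⟩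
end
end

section
/- Let A: D(A)⊂H→H, B: D(B)⊂K→H, F: D(F)⊂H→K, E: D(E)⊂K→K be antilinear operators with D(A) ⊂ D(F), μ ∈ ρ(A) (so (A−μ)^{-1} is a bounded real-linear bijection), (A−μ)^{-1}B bounded on D(B), and F(A−μ)^{-1} closed on H. Then the block operator matrix 𝒜 = [[A, B],[F, E]] on D(𝒜) = (D(A)∩D(F)) ⊕ (D(B)∩D(E)) is closable if and only if the Schur complement S₂(μ) = E − μ − F(A−μ)^{-1}B is closable. -/
open Classical
noncomputable section

variable {H K : Type*}
  [NormedAddCommGroup H] [InnerProductSpace ℂ H] [CompleteSpace H]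
  [NormedAddCommGroup K] [InnerProductSpace ℂ K] [CompleteSpace K]

/-- An operator `(D, f)` between normed groups is closable: if `(0, y)` is in the closure
of its graph then `y = 0`. (For additive — in particular antilinear — operators this is the
standard characterization of closability.) -/
def Closable {E F : Type*} [NormedAddCommGroup E] [NormedAddCommGroup F]
    (D : Set E) (f : E → F) : Prop :=
  ∀ y : F, ((0 : E), y) ∈ closure {p : E × F | p.1 ∈ D ∧ f p.1 = p.2} → y = 0

/-!
Write `R = (A - μ)⁻¹`. For `y ∈ D(B)` the vector `(-R B y, y)` lies in `D(𝒜)` and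
`𝒜 (-R B y, y) = (-μ R B y, S₂(μ) y + μ y)`; as `R B` is bounded, a sequence showing that
`S₂(μ)` is not closable is thereby turned into one showing that `𝒜` is not closable.
Conversely, let `(x_n, y_n) → 0` in `D(𝒜)` with `𝒜 (x_n, y_n) → (u, v)`, and
`z_n = (A - μ) x_n + B y_n → u`. Then `R z_n = x_n + R B y_n → 0`, while `R z_n → R u`,
so `u = 0`. The real-linear closed operator `F R` is bounded by the closed graph theorem, hence
`F R z_n → 0` and `S₂(μ) y_n = (F x_n + E y_n) - μ y_n - F R z_n → v`; closability of `S₂(μ)`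
gives `v = 0`.
-/

open Filter Topology

theorem closable_iff_tendsto {X Y : Type*} [NormedAddCommGroup X] [NormedAddCommGroup Y]
    {D : Set X} {f : X → Y} :
    Closable D f ↔ ∀ (x : ℕ → X) (v : Y), (∀ n, x n ∈ D) → Tendsto x atTop (𝓝 0) →
      Tendsto (fun n => f (x n)) atTop (𝓝 v) → v = 0 := by
  refine ⟨fun h x v hD hx hfx => h v ?_, fun h v hv => ?_⟩
  · exact mem_closure_of_tendsto (hx.prodMk_nhds hfx) (Eventually.of_forall fun n => ⟨hD n, rfl⟩)
  · obtain ⟨p, hp, hlim⟩ := mem_closure_iff_seq_limit.1 hv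
    obtain ⟨hp1, hp2⟩ := (Prod.tendsto_iff p _).1 hlim
    exact h _ v (fun n => (hp n).1) hp1 (hp2.congr fun n => ((hp n).2).symm)

theorem tendsto_zero_of_norm_le {X Y ι : Type*} [SeminormedAddCommGroup X]
    [SeminormedAddCommGroup Y] {D : Set X} {g : X → Y} {c : ℝ} (hg : ∀ y ∈ D, ‖g y‖ ≤ c * ‖y‖)
    {l : Filter ι} {y : ι → X} (hyD : ∀ n, y n ∈ D) (hy : Tendsto y l (𝓝 0)) :
    Tendsto (fun n => g (y n)) l (𝓝 0) :=
  squeeze_zero_norm (fun n => hg _ (hyD n)) (by simpa using hy.norm.const_mul c)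

section

variable {X Y : Type*} [NormedAddCommGroup X] [InnerProductSpace ℂ X]
  [NormedAddCommGroup Y] [InnerProductSpace ℂ Y] {D : Set X} {x y : X}

namespace IsLinSubspace

theorem add_mem (hD : IsLinSubspace D) (hx : x ∈ D) (hy : y ∈ D) : x + y ∈ D := by
  simpa using hD.2 1 x y hx hy

theorem neg_mem (hD : IsLinSubspace D) (hx : x ∈ D) : -x ∈ D := by
  simpa using hD.2 (-1) x 0 hx hD.1

theorem real_smul_mem (hD : IsLinSubspace D) (r : ℝ) (hx : x ∈ D) : r • x ∈ D := by
  simpa using hD.2 r x 0 hx hD.1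

end IsLinSubspace

namespace AntilinearOn

variable {f : X → Y}

theorem mono (hf : AntilinearOn D f) {D' : Set X} (h : D' ⊆ D) : AntilinearOn D' f :=
  fun a x y hx hy => hf a x y (h hx) (h hy)

theorem map_add (hf : AntilinearOn D f) (hx : x ∈ D) (hy : y ∈ D) :
    f (x + y) = f x + f y := by
  simpa using hf 1 x y hx hy

theorem map_zero (hf : AntilinearOn D f) (h0 : (0 : X) ∈ D) : f 0 = 0 := by
  simpa using hf.map_add h0 h0

theorem map_neg (hf : AntilinearOn D f) (h0 : (0 : X) ∈ D) (hx : x ∈ D) : f (-x) = -f x := by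
  simpa [hf.map_zero h0] using hf (-1) x 0 hx h0

theorem map_real_smul (hf : AntilinearOn D f) (h0 : (0 : X) ∈ D) (r : ℝ) (hx : x ∈ D) :
    f (r • x) = r • f x := by
  simpa [hf.map_zero h0] using hf r x 0 hx h0

end AntilinearOn

/-- `R = (f - μ)⁻¹`, defined on all of `X` with values in the domain `D` of `f`. -/
structure IsResolvent (D : Set X) (f : X → X) (μ : ℂ) (R : X → X) : Prop where
  mem : ∀ y, R y ∈ D
  right_inv : ∀ y, f (R y) - μ • R y = y
  left_inv : ∀ x ∈ D, R (f x - μ • x) = x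

namespace IsResolvent

variable {f : X → X} {μ : ℂ} {R : X → X}

theorem apply_eq (hR : IsResolvent D f μ R) {z : X} (hx : x ∈ D) (h : f x - μ • x = z) :
    R z = x :=
  h ▸ hR.left_inv x hx

theorem injective (hR : IsResolvent D f μ R) : Function.Injective R := fun u v huv => by
  rw [← hR.right_inv u, ← hR.right_inv v, huv]

theorem map_zero (hR : IsResolvent D f μ R) (hf : AntilinearOn D f) (h0 : (0 : X) ∈ D) :
    R 0 = 0 :=
  hR.apply_eq h0 (by simp [hf.map_zero h0])

theorem apply_add_sub_smul (hR : IsResolvent D f μ R) (hD : IsLinSubspace D)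
    (hf : AntilinearOn D f) (hx : x ∈ D) (b : X) : R (f x + b - μ • x) = x + R b := by
  refine hR.apply_eq (hD.add_mem hx (hR.mem b)) ?_
  rw [hf.map_add hx (hR.mem b), smul_add, add_sub_add_comm, hR.right_inv]
  exact sub_add_eq_add_sub _ _ _

theorem map_add (hR : IsResolvent D f μ R) (hD : IsLinSubspace D) (hf : AntilinearOn D f)
    (p q : X) : R (p + q) = R p + R q := by
  refine hR.apply_eq (hD.add_mem (hR.mem p) (hR.mem q)) ?_
  rw [hf.map_add (hR.mem p) (hR.mem q), smul_add, add_sub_add_comm, hR.right_inv, hR.right_inv]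

theorem map_real_smul (hR : IsResolvent D f μ R) (hD : IsLinSubspace D) (hf : AntilinearOn D f)
    (r : ℝ) (p : X) : R (r • p) = r • R p := by
  refine hR.apply_eq (hD.real_smul_mem r (hR.mem p)) ?_
  rw [hf.map_real_smul hD.1 r (hR.mem p), smul_comm μ r, ← smul_sub, hR.right_inv]

def toRealLinearMap (hR : IsResolvent D f μ R) (hD : IsLinSubspace D) (hf : AntilinearOn D f) :
    X →ₗ[ℝ] X where
  toFun := R
  map_add' := hR.map_add hD hf
  map_smul' := hR.map_real_smul hD hf

theorem continuous (hR : IsResolvent D f μ R) (hD : IsLinSubspace D) (hf : AntilinearOn D f)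
    {c : ℝ} (hc : ∀ y, ‖R y‖ ≤ c * ‖y‖) : Continuous R :=
  ((hR.toRealLinearMap hD hf).mkContinuous c hc).continuous

theorem continuous_comp_of_isClosed_graph [CompleteSpace X] [CompleteSpace Y]
    (hR : IsResolvent D f μ R) (hD : IsLinSubspace D) (hf : AntilinearOn D f) {g : X → Y}
    (hg : AntilinearOn D g) (hclosed : IsClosed {p : X × Y | g (R p.1) = p.2}) :
    Continuous (fun z => g (R z)) := by
  let gR : X →ₗ[ℝ] Y :=
    { toFun := fun z => g (R z)
      map_add' := fun p q => by
        simp only [hR.map_add hD hf, hg.map_add (hR.mem p) (hR.mem q)]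
      map_smul' := fun r p => by
        simp only [hR.map_real_smul hD hf, hg.map_real_smul hD.1 r (hR.mem p),
          RingHom.id_apply] }
  refine gR.continuous_of_isClosed_graph ?_
  convert hclosed using 1
  ext p
  exact eq_comm

end IsResolvent

def blockOpDomain (DA DF : Set X) (DB DE : Set Y) : Set (X × Y) :=
  {p | p.1 ∈ DA ∩ DF ∧ p.2 ∈ DB ∩ DE}

def blockOp (fA : X → X) (fB : Y → X) (fF : X → Y) (fE : Y → Y) : X × Y → X × Y :=
  fun p => (fA p.1 + fB p.2, fF p.1 + fE p.2)

/-- `S₂(μ) = E - μ - F R B` with `R = (A - μ)⁻¹`. -/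
def schurComplement (fB : Y → X) (fF : X → Y) (fE : Y → Y) (μ : ℂ) (R : X → X) : Y → Y :=
  fun y => fE y - μ • y - fF (R (fB y))

variable {DA DF : Set X} {DB DE : Set Y} {fA : X → X} {fB : Y → X} {fF : X → Y} {fE : Y → Y}
  {μ : ℂ} {R : X → X}

theorem blockOp_neg_resolvent (hA : AntilinearOn DA fA) (hF : AntilinearOn DA fF)
    (h0 : (0 : X) ∈ DA) (hR : IsResolvent DA fA μ R) (y : Y) :
    blockOp fA fB fF fE (-R (fB y), y) =
      (μ • -R (fB y), schurComplement fB fF fE μ R y + μ • y) := by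
  have hAR : fA (R (fB y)) = fB y + μ • R (fB y) := sub_eq_iff_eq_add.mp (hR.right_inv _)
  simp only [blockOp, schurComplement, hA.map_neg h0 (hR.mem _), hF.map_neg h0 (hR.mem _), hAR,
    smul_neg, Prod.mk.injEq]
  constructor <;> abel

theorem schurComplement_eq (hD : IsLinSubspace DA) (hA : AntilinearOn DA fA)
    (hF : AntilinearOn DA fF) (hR : IsResolvent DA fA μ R) (hx : x ∈ DA) (y : Y) :
    schurComplement fB fF fE μ R y = fF x + fE y - μ • y - fF (R (fA x + fB y - μ • x)) := by
  rw [hR.apply_add_sub_smul hD hA hx, hF.map_add hx (hR.mem _), schurComplement]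
  abel

theorem closable_schurComplement_of_closable_blockOp (hD : IsLinSubspace DA)
    (hA : AntilinearOn DA fA) (hF : AntilinearOn DA fF) (hAF : DA ⊆ DF)
    (hR : IsResolvent DA fA μ R) {c : ℝ} (hRB : ∀ y ∈ DB, ‖R (fB y)‖ ≤ c * ‖y‖)
    (h : Closable (blockOpDomain DA DF DB DE) (blockOp fA fB fF fE)) :
    Closable (DB ∩ DE) (schurComplement fB fF fE μ R) := by
  rw [closable_iff_tendsto] at h ⊢
  intro y v hy hy0 hSv
  have hx0 : Tendsto (fun n => -R (fB (y n))) atTop (𝓝 0) := by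
    simpa using (tendsto_zero_of_norm_le hRB (fun n => (hy n).1) hy0).neg
  have hmem : ∀ n, (-R (fB (y n)), y n) ∈ blockOpDomain DA DF DB DE := fun n =>
    have hx := hD.neg_mem (hR.mem (fB (y n)))
    ⟨⟨hx, hAF hx⟩, hy n⟩
  have hlim := (hx0.const_smul μ).prodMk_nhds (hSv.add (hy0.const_smul μ))
  simp only [smul_zero, add_zero] at hlim
  simp_rw [← blockOp_neg_resolvent hA hF hD.1 hR] at hlim
  exact congrArg Prod.snd (h _ (0, v) hmem (hx0.prodMk_nhds hy0) hlim)

theorem closable_blockOp_of_closable_schurComplement [CompleteSpace X] [CompleteSpace Y]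
    (hD : IsLinSubspace DA) (hA : AntilinearOn DA fA) (hF : AntilinearOn DA fF)
    (hR : IsResolvent DA fA μ R) {c : ℝ} (hRbdd : ∀ y, ‖R y‖ ≤ c * ‖y‖)
    {c' : ℝ} (hRB : ∀ y ∈ DB, ‖R (fB y)‖ ≤ c' * ‖y‖)
    (hFR : IsClosed {p : X × Y | fF (R p.1) = p.2})
    (h : Closable (DB ∩ DE) (schurComplement fB fF fE μ R)) :
    Closable (blockOpDomain DA DF DB DE) (blockOp fA fB fF fE) := by
  rw [closable_iff_tendsto] at h ⊢
  rintro p ⟨u, v⟩ hp hp0 hpuv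
  obtain ⟨hx0, hy0⟩ : Tendsto (fun n => (p n).1) atTop (𝓝 0) ∧
      Tendsto (fun n => (p n).2) atTop (𝓝 0) := (Prod.tendsto_iff _ _).1 hp0
  obtain ⟨ha, hb⟩ := (Prod.tendsto_iff _ _).1 hpuv
  set z := fun n => fA (p n).1 + fB (p n).2 - μ • (p n).1
  have hz : Tendsto z atTop (𝓝 u) := by
    have hlim := ha.sub (hx0.const_smul μ)
    rwa [smul_zero, sub_zero] at hlim
  have hRz : Tendsto (fun n => R (z n)) atTop (𝓝 0) := by
    have hlim := hx0.add (tendsto_zero_of_norm_le hRB (fun n => (hp n).2.1) hy0)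
    rw [add_zero] at hlim
    exact hlim.congr fun n => (hR.apply_add_sub_smul hD hA (hp n).1.1 _).symm
  have hu : u = 0 := hR.injective <| (hR.map_zero hA hD.1).symm ▸
    tendsto_nhds_unique (((hR.continuous hD hA hRbdd).tendsto u).comp hz) hRz
  have hFRz : Tendsto (fun n => fF (R (z n))) atTop (𝓝 0) := by
    simpa [Function.comp_def, hu, hR.map_zero hA hD.1, hF.map_zero hD.1] using
      ((hR.continuous_comp_of_isClosed_graph hD hA hF hFR).tendsto u).comp hz
  have hS : Tendsto (fun n => schurComplement fB fF fE μ R (p n).2) atTop (𝓝 v) := by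
    have hlim := (hb.sub (hy0.const_smul μ)).sub hFRz
    rw [smul_zero, sub_zero, sub_zero] at hlim
    exact hlim.congr fun n => (schurComplement_eq hD hA hF hR (hp n).1.1 _).symm
  exact Prod.ext hu (h _ v (fun n => (hp n).2) hy0 hS)

end

theorem blockMatrix_closable_iff_schur_closable_general
    (DA : Set H) (fA : H → H) (DB : Set K) (fB : K → H)
    (DF : Set H) (fF : H → K) (DE : Set K) (fE : K → K)
    (hsubA : IsLinSubspace DA)
    (hantiA : AntilinearOn DA fA)
    (hantiF : AntilinearOn DF fF)
    (hAF : DA ⊆ DF)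
    (μ : ℂ) (Ainv : H → H)
    -- `μ ∈ ρ(A)`: `A − μ` is a bijection from `D(A)` onto `H` with bounded inverse `Ainv`
    (hAinv_mem : ∀ y : H, Ainv y ∈ DA)
    (hAinv_right : ∀ y : H, fA (Ainv y) - μ • Ainv y = y)
    (hAinv_left : ∀ x ∈ DA, Ainv (fA x - μ • x) = x)
    (hAinv_bdd : ∃ c : ℝ, ∀ y : H, ‖Ainv y‖ ≤ c * ‖y‖)
    -- `(A − μ)⁻¹ B` is bounded on `D(B)`
    (hAinvB_bdd : ∃ c : ℝ, ∀ y ∈ DB, ‖Ainv (fB y)‖ ≤ c * ‖y‖)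
    -- `F (A − μ)⁻¹` (everywhere defined since `D(A) ⊆ D(F)`) is closed on `H`
    (hFAinv_closed : IsClosed {p : H × K | fF (Ainv p.1) = p.2}) :
    Closable {p : H × K | p.1 ∈ DA ∩ DF ∧ p.2 ∈ DB ∩ DE}
        (fun p => (fA p.1 + fB p.2, fF p.1 + fE p.2)) ↔
      Closable (DB ∩ DE) (fun y => fE y - μ • y - fF (Ainv (fB y))) := by
  have hR : IsResolvent DA fA μ Ainv := ⟨hAinv_mem, hAinv_right, hAinv_left⟩
  have hFA : AntilinearOn DA fF := hantiF.mono hAF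
  obtain ⟨c, hc⟩ := hAinv_bdd
  obtain ⟨c', hc'⟩ := hAinvB_bdd
  exact ⟨closable_schurComplement_of_closable_blockOp hsubA hantiA hFA hAF hR hc',
    closable_blockOp_of_closable_schurComplement hsubA hantiA hFA hR hc hc' hFAinv_closed⟩

/-- Let `A, B, F, E` be antilinear operators (`A` on `H`, `E` on `K`,
`B : K → H`, `F : H → K`) with `D(A) ⊆ D(F)`, let `μ ∈ ρ(A)` with bounded real-linear
resolvent `Ainv = (A − μ)⁻¹`, suppose `(A − μ)⁻¹B` is bounded on `D(B)` and `F(A − μ)⁻¹` is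
closed on `H`.  Then the block operator matrix `𝒜 = [[A, B], [F, E]]` on
`(D(A) ∩ D(F)) ⊕ (D(B) ∩ D(E))` is closable iff the Schur complement
`S₂(μ) = E − μ − F(A − μ)⁻¹B` (domain `D(B) ∩ D(E)`) is closable. -/
theorem blockMatrix_closable_iff_schur_closable
    (DA : Set H) (fA : H → H) (DB : Set K) (fB : K → H)
    (DF : Set H) (fF : H → K) (DE : Set K) (fE : K → K)
    (hsubA : IsLinSubspace DA) (hsubB : IsLinSubspace DB)
    (hsubF : IsLinSubspace DF) (hsubE : IsLinSubspace DE)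
    (hantiA : AntilinearOn DA fA) (hantiB : AntilinearOn DB fB)
    (hantiF : AntilinearOn DF fF) (hantiE : AntilinearOn DE fE)
    (hAF : DA ⊆ DF)
    (μ : ℂ) (Ainv : H → H)
    -- `μ ∈ ρ(A)`: `A − μ` is a bijection from `D(A)` onto `H` with bounded inverse `Ainv`
    (hAinv_mem : ∀ y : H, Ainv y ∈ DA)
    (hAinv_right : ∀ y : H, fA (Ainv y) - μ • Ainv y = y)
    (hAinv_left : ∀ x ∈ DA, Ainv (fA x - μ • x) = x)
    (hAinv_bdd : ∃ c : ℝ, ∀ y : H, ‖Ainv y‖ ≤ c * ‖y‖)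
    -- `(A − μ)⁻¹ B` is bounded on `D(B)`
    (hAinvB_bdd : ∃ c : ℝ, ∀ y ∈ DB, ‖Ainv (fB y)‖ ≤ c * ‖y‖)
    -- `F (A − μ)⁻¹` (everywhere defined since `D(A) ⊆ D(F)`) is closed on `H`
    (hFAinv_closed : IsClosed {p : H × K | fF (Ainv p.1) = p.2}) :
    Closable {p : H × K | p.1 ∈ DA ∩ DF ∧ p.2 ∈ DB ∩ DE}
        (fun p => (fA p.1 + fB p.2, fF p.1 + fE p.2)) ↔
      Closable (DB ∩ DE) (fun y => fE y - μ • y - fF (Ainv (fB y))) :=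
  blockMatrix_closable_iff_schur_closable_general DA fA DB fB DF fF DE fE hsubA hantiA hantiF hAF μ
    Ainv hAinv_mem hAinv_right hAinv_left hAinv_bdd hAinvB_bdd hFAinv_closed
end
end
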